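/- Let n ≥ 1 and equip ℝ^n × ℝ^n with the standard symplectic form ω₀((x,ξ),(x',ξ')) = ⟨ξ, x'⟩ − ⟨ξ', x⟩, and equip (ℝ^n × ℝ^n) × (ℝ^n × ℝ^n) with the product form ω₀ ⊕ ω₀. Let σ(x,ξ) = (x,−ξ). Let f : ℝ^n × ℝ^n → ℝ be differentiable with f > 0 everywhere and f ∘ σ = f, let v_f be its Hamiltonian vector field with respect to ω₀, and let γ : ℝ → ℝ^n × ℝ^n be an integral curve of v_f with f(γ(0)) = 1. Fix ℓ > 0 and write γ(0) = (x₁,ξ₁), γ(ℓ) = (x₂,ξ₂), and (x',ξ') = γ(ℓ/2). Define h(z₁,z₂) = √(f(z₁)² + f(z₂)²) with Hamiltonian vector field v_h with respect to ω₀ ⊕ ω₀. Then the curve δ(t) := ( σ(γ(ℓ/2 − t/√2)), γ(ℓ/2 + t/√2) ) is an integral curve of v_h satisfying δ(0) = (x', −ξ', x', ξ'), which lies in the conormal of the diagonal {(x, −ξ, x, ξ) : x, ξ ∈ ℝ^n}, and δ(ℓ/√2) = (x₁, −ξ₁, x₂, ξ₂). -/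

import Mathlib

/-! Energy conservation keeps `γ` on `{f = 1}`. Since `σ` is anti-symplectic and `f ∘ σ = f`,
`v_f ∘ σ = -σ ∘ v_f`, so `s ↦ σ (γ (ℓ/2 - s))` is again an integral curve of `v_f`, as is
`s ↦ γ (ℓ/2 + s)`. On `{f = 1} × {f = 1}` the differential of `h = √(f² + f²)` is `(df ⊕ df)/√2`,
so there `v_h = (v_f, v_f)/√2`, and running both curves at speed `1/√2` gives an integral curve
of `v_h`. -/

open scoped RealInnerProductSpace

noncomputable def omega0 {n : ℕ}
    (z u : EuclideanSpace ℝ (Fin n) × EuclideanSpace ℝ (Fin n)) : ℝ :=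
  ⟪z.2, u.1⟫ - ⟪u.2, z.1⟫

abbrev PhaseSpace (n : ℕ) := EuclideanSpace ℝ (Fin n) × EuclideanSpace ℝ (Fin n)

def IsHamiltonianVectorField {E : Type*} [NormedAddCommGroup E] [NormedSpace ℝ E]
    (ω : E → E → ℝ) (f : E → ℝ) (v : E → E) : Prop :=
  ∀ z u, ω (v z) u = fderiv ℝ f z u

noncomputable def omega0Prod {n : ℕ} (z u : PhaseSpace n × PhaseSpace n) : ℝ :=
  omega0 z.1 u.1 + omega0 z.2 u.2

noncomputable def fiberReflection (n : ℕ) : PhaseSpace n ≃L[ℝ] PhaseSpace n :=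
  (ContinuousLinearEquiv.refl ℝ _).prodCongr (ContinuousLinearEquiv.neg ℝ)

@[simp]
lemma fiberReflection_apply {n : ℕ} (z : PhaseSpace n) : fiberReflection n z = (z.1, -z.2) :=
  rfl

@[simp]
lemma fiberReflection_fiberReflection {n : ℕ} (z : PhaseSpace n) :
    fiberReflection n (fiberReflection n z) = z := by
  simp

section omega0

variable {n : ℕ}

lemma omega0_self (z : PhaseSpace n) : omega0 z z = 0 := by
  rw [omega0, real_inner_comm, sub_self]

lemma omega0_zero_right (z : PhaseSpace n) : omega0 z 0 = 0 := by
  simp [omega0]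

lemma omega0_smul_left (c : ℝ) (z u : PhaseSpace n) : omega0 (c • z) u = c * omega0 z u := by
  simp only [omega0, Prod.smul_fst, Prod.smul_snd, real_inner_smul_left, real_inner_smul_right]
  ring

lemma omega0_neg_left (z u : PhaseSpace n) : omega0 (-z) u = -omega0 z u := by
  simpa using omega0_smul_left (-1) z u

lemma omega0_fiberReflection (z u : PhaseSpace n) :
    omega0 (fiberReflection n z) (fiberReflection n u) = -omega0 z u := by
  simp only [omega0, fiberReflection_apply, inner_neg_left]
  ring

lemma omega0_left_injective : Function.Injective (omega0 (n := n)) := by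
  intro a b h
  have h₂ := congrFun h (a.2 - b.2, 0)
  have h₁ := congrFun h (0, a.1 - b.1)
  simp only [omega0, inner_zero_left, inner_zero_right, sub_zero, zero_sub, neg_inj] at h₁ h₂
  have d₂ : ⟪a.2 - b.2, a.2 - b.2⟫ = 0 := by rw [inner_sub_left, h₂, sub_self]
  have d₁ : ⟪a.1 - b.1, a.1 - b.1⟫ = 0 := by rw [inner_sub_right, h₁, sub_self]
  exact Prod.ext (sub_eq_zero.mp (inner_self_eq_zero.mp d₁))
    (sub_eq_zero.mp (inner_self_eq_zero.mp d₂))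

lemma omega0Prod_left_injective : Function.Injective (omega0Prod (n := n)) := by
  intro a b h
  refine Prod.ext (omega0_left_injective (funext fun u => ?_))
    (omega0_left_injective (funext fun u => ?_))
  · simpa [omega0Prod, omega0_zero_right] using congrFun h (u, 0)
  · simpa [omega0Prod, omega0_zero_right] using congrFun h (0, u)

end omega0

section Calculus

variable {E : Type*} [NormedAddCommGroup E] [NormedSpace ℝ E]

lemma IsHamiltonianVectorField.apply_eq_of_hasDerivAt {ω : E → E → ℝ} {f : E → ℝ} {v : E → E}
    (hv : IsHamiltonianVectorField ω f v) (hω : ∀ z, ω z z = 0) (hf : Differentiable ℝ f)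
    {γ : ℝ → E} (hγ : ∀ t, HasDerivAt γ (v (γ t)) t) (s t : ℝ) : f (γ s) = f (γ t) := by
  have hderiv : ∀ t, HasDerivAt (fun t => f (γ t)) 0 t := fun t => by
    have hzero : fderiv ℝ f (γ t) (v (γ t)) = 0 := by rw [← hv, hω]
    have hcomp := (hf (γ t)).hasFDerivAt.comp_hasDerivAt t (hγ t)
    rwa [hzero] at hcomp
  exact is_const_of_deriv_eq_zero (fun t => (hderiv t).differentiableAt)
    (fun t => (hderiv t).deriv) s t

lemma fderiv_apply_of_comp_eq {f : E → ℝ} (L : E ≃L[ℝ] E) (hfL : ∀ z, f (L z) = f z)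
    (z u : E) : fderiv ℝ f (L z) (L u) = fderiv ℝ f z u := by
  have h := L.comp_right_fderiv (f := f) (x := z)
  rw [show f ∘ L = f from funext hfL] at h
  exact (congrArg (fun T => T u) h).symm

lemma hasDerivAt_comp_const_sub_of_anticommute {v : E → E} (L : E →L[ℝ] E)
    (hvL : ∀ z, v (L z) = -L (v z)) {γ : ℝ → E} (hγ : ∀ t, HasDerivAt γ (v (γ t)) t)
    (a t : ℝ) : HasDerivAt (fun s => L (γ (a - s))) (v (L (γ (a - t)))) t := by
  rw [hvL, ← map_neg]
  exact L.hasFDerivAt.comp_hasDerivAt t ((hγ (a - t)).comp_const_sub a t)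

end Calculus

section Hamiltonian

variable {n : ℕ} {f : PhaseSpace n → ℝ} {vf : PhaseSpace n → PhaseSpace n}
  {vh : PhaseSpace n × PhaseSpace n → PhaseSpace n × PhaseSpace n}

local notation "σ" => fiberReflection n

lemma IsHamiltonianVectorField.apply_fiberReflection (hv : IsHamiltonianVectorField omega0 f vf)
    (hfσ : ∀ z, f (σ z) = f z) (z : PhaseSpace n) :
    vf (σ z) = -σ (vf z) := by
  refine omega0_left_injective (funext fun u => ?_)
  calc omega0 (vf (σ z)) u = fderiv ℝ f (σ z) (σ (σ u)) := by
        rw [hv, fiberReflection_fiberReflection]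
    _ = omega0 (vf z) (σ u) := by rw [fderiv_apply_of_comp_eq σ hfσ, hv]
    _ = omega0 (-σ (vf z)) u := by
      rw [omega0_neg_left, ← omega0_fiberReflection, fiberReflection_fiberReflection]

lemma fderiv_sqrt_sq_add_sq_apply (hf : Differentiable ℝ f) (z : PhaseSpace n × PhaseSpace n)
    (hz : f z.1 ^ 2 + f z.2 ^ 2 ≠ 0) (u : PhaseSpace n × PhaseSpace n) :
    fderiv ℝ (fun w : PhaseSpace n × PhaseSpace n => √(f w.1 ^ 2 + f w.2 ^ 2)) z u =
      (f z.1 * fderiv ℝ f z.1 u.1 + f z.2 * fderiv ℝ f z.2 u.2) / √(f z.1 ^ 2 + f z.2 ^ 2) := by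
  have h₁ := (hf z.1).hasFDerivAt.comp z hasFDerivAt_fst
  have h₂ := (hf z.2).hasFDerivAt.comp z hasFDerivAt_snd
  have hs : HasFDerivAt (fun w : PhaseSpace n × PhaseSpace n => √(f w.1 ^ 2 + f w.2 ^ 2)) _ z :=
    ((h₁.pow 2).add (h₂.pow 2)).sqrt hz
  rw [hs.fderiv]
  simp only [Function.comp_apply, Pi.add_apply, Nat.add_one_sub_one, pow_one, nsmul_eq_mul,
    Nat.cast_ofNat, add_apply, smul_apply,
    ContinuousLinearMap.comp_apply, ContinuousLinearMap.coe_fst', ContinuousLinearMap.coe_snd',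
    smul_eq_mul]
  field_simp

lemma IsHamiltonianVectorField.apply_eq_inv_sqrt_two_smul
    (hvh : IsHamiltonianVectorField omega0Prod (fun w => √(f w.1 ^ 2 + f w.2 ^ 2)) vh)
    (hf : Differentiable ℝ f) (hvf : IsHamiltonianVectorField omega0 f vf)
    {z : PhaseSpace n × PhaseSpace n} (h₁ : f z.1 = 1) (h₂ : f z.2 = 1) :
    vh z = (√2)⁻¹ • (vf z.1, vf z.2) := by
  refine omega0Prod_left_injective (funext fun u => ?_)
  rw [hvh, fderiv_sqrt_sq_add_sq_apply hf z (by norm_num [h₁, h₂]), h₁, h₂, ← hvf, ← hvf,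
    show (1 : ℝ) ^ 2 + 1 ^ 2 = 2 by norm_num]
  simp only [omega0Prod, Prod.smul_fst, Prod.smul_snd, omega0_smul_left]
  ring

lemma hasDerivAt_prodMk_div_sqrt_two (hf : Differentiable ℝ f)
    (hvf : IsHamiltonianVectorField omega0 f vf)
    (hvh : IsHamiltonianVectorField omega0Prod (fun w => √(f w.1 ^ 2 + f w.2 ^ 2)) vh)
    {γ₁ γ₂ : ℝ → PhaseSpace n} (hγ₁ : ∀ s, HasDerivAt γ₁ (vf (γ₁ s)) s)
    (hγ₂ : ∀ s, HasDerivAt γ₂ (vf (γ₂ s)) s) (h₁ : ∀ s, f (γ₁ s) = 1) (h₂ : ∀ s, f (γ₂ s) = 1)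
    (t : ℝ) :
    HasDerivAt (fun t => (γ₁ (t / √2), γ₂ (t / √2))) (vh (γ₁ (t / √2), γ₂ (t / √2))) t := by
  rw [hvh.apply_eq_inv_sqrt_two_smul hf hvf (h₁ _) (h₂ _)]
  have hdiv : HasDerivAt (fun t : ℝ => t / √2) (√2)⁻¹ t := by
    simpa using (hasDerivAt_id t).div_const (√2)
  exact ((hγ₁ _).scomp t hdiv).prodMk ((hγ₂ _).scomp t hdiv)

end Hamiltonian

theorem chord_to_diagonal_chord_general (n : ℕ)
    (f : EuclideanSpace ℝ (Fin n) × EuclideanSpace ℝ (Fin n) → ℝ)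
    (hf : Differentiable ℝ f)
    (hfsym : ∀ z : EuclideanSpace ℝ (Fin n) × EuclideanSpace ℝ (Fin n), f (z.1, -z.2) = f z)
    (vf : EuclideanSpace ℝ (Fin n) × EuclideanSpace ℝ (Fin n) →
      EuclideanSpace ℝ (Fin n) × EuclideanSpace ℝ (Fin n))
    (hvf : ∀ z u, omega0 (vf z) u = fderiv ℝ f z u)
    (γ : ℝ → EuclideanSpace ℝ (Fin n) × EuclideanSpace ℝ (Fin n))
    (hγ : ∀ t : ℝ, HasDerivAt γ (vf (γ t)) t)
    (hγ0 : f (γ 0) = 1)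
    (ℓ : ℝ)
    (vh : (EuclideanSpace ℝ (Fin n) × EuclideanSpace ℝ (Fin n)) ×
        (EuclideanSpace ℝ (Fin n) × EuclideanSpace ℝ (Fin n)) →
      (EuclideanSpace ℝ (Fin n) × EuclideanSpace ℝ (Fin n)) ×
        (EuclideanSpace ℝ (Fin n) × EuclideanSpace ℝ (Fin n)))
    (hvh : ∀ z u, omega0 (vh z).1 u.1 + omega0 (vh z).2 u.2 =
      fderiv ℝ (fun w : (EuclideanSpace ℝ (Fin n) × EuclideanSpace ℝ (Fin n)) ×
        (EuclideanSpace ℝ (Fin n) × EuclideanSpace ℝ (Fin n)) =>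
          Real.sqrt (f w.1 ^ 2 + f w.2 ^ 2)) z u) :
    (∀ t : ℝ, HasDerivAt
      (fun t => ((((γ (ℓ / 2 - t / Real.sqrt 2)).1, -(γ (ℓ / 2 - t / Real.sqrt 2)).2),
        γ (ℓ / 2 + t / Real.sqrt 2))))
      (vh (((γ (ℓ / 2 - t / Real.sqrt 2)).1, -(γ (ℓ / 2 - t / Real.sqrt 2)).2),
        γ (ℓ / 2 + t / Real.sqrt 2))) t) ∧
    ((((γ (ℓ / 2 - 0 / Real.sqrt 2)).1, -(γ (ℓ / 2 - 0 / Real.sqrt 2)).2),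
        γ (ℓ / 2 + 0 / Real.sqrt 2)) =
      (((γ (ℓ / 2)).1, -(γ (ℓ / 2)).2), γ (ℓ / 2))) ∧
    ((((γ (ℓ / 2)).1, -(γ (ℓ / 2)).2), γ (ℓ / 2)) ∈
      {w : (EuclideanSpace ℝ (Fin n) × EuclideanSpace ℝ (Fin n)) ×
          (EuclideanSpace ℝ (Fin n) × EuclideanSpace ℝ (Fin n)) |
        ∃ x ξ : EuclideanSpace ℝ (Fin n), w = ((x, -ξ), (x, ξ))}) ∧
    ((((γ (ℓ / 2 - (ℓ / Real.sqrt 2) / Real.sqrt 2)).1,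
        -(γ (ℓ / 2 - (ℓ / Real.sqrt 2) / Real.sqrt 2)).2),
        γ (ℓ / 2 + (ℓ / Real.sqrt 2) / Real.sqrt 2)) =
      (((γ 0).1, -(γ 0).2), γ ℓ)) := by
  have hvfσ : ∀ z, vf (fiberReflection n z) = -fiberReflection n (vf z) :=
    IsHamiltonianVectorField.apply_fiberReflection hvf hfsym
  have energy : ∀ s, f (γ s) = 1 := fun s =>
    (IsHamiltonianVectorField.apply_eq_of_hasDerivAt hvf omega0_self hf hγ s 0).trans hγ0
  refine ⟨hasDerivAt_prodMk_div_sqrt_two hf hvf hvh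
      (hasDerivAt_comp_const_sub_of_anticommute (fiberReflection n : _ →L[ℝ] _) hvfσ hγ (ℓ / 2))
      (fun s => (hγ _).comp_const_add (ℓ / 2) s)
      (fun s => (hfsym _).trans (energy _)) (fun s => energy _),
    by simp, ⟨_, _, rfl⟩, ?_⟩
  rw [div_div, Real.mul_self_sqrt zero_le_two, sub_self, add_halves]

/-- Forward direction of the paper's Lemma "three ways of looking at a Reeb
chord": a chord of length `ℓ` for the flow of `f` from `(x₁,ξ₁)` to `(x₂,ξ₂)`
yields a chord of length `ℓ/√2` for the flow of `f # f` from the conormal of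
the diagonal to the point `(x₁,−ξ₁,x₂,ξ₂)`. -/
theorem chord_to_diagonal_chord (n : ℕ) (hn : 1 ≤ n)
    (f : EuclideanSpace ℝ (Fin n) × EuclideanSpace ℝ (Fin n) → ℝ)
    (hf : Differentiable ℝ f)
    (hfpos : ∀ z, 0 < f z)
    (hfsym : ∀ z : EuclideanSpace ℝ (Fin n) × EuclideanSpace ℝ (Fin n), f (z.1, -z.2) = f z)
    (vf : EuclideanSpace ℝ (Fin n) × EuclideanSpace ℝ (Fin n) →
      EuclideanSpace ℝ (Fin n) × EuclideanSpace ℝ (Fin n))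
    (hvf : ∀ z u, omega0 (vf z) u = fderiv ℝ f z u)
    (γ : ℝ → EuclideanSpace ℝ (Fin n) × EuclideanSpace ℝ (Fin n))
    (hγ : ∀ t : ℝ, HasDerivAt γ (vf (γ t)) t)
    (hγ0 : f (γ 0) = 1)
    (ℓ : ℝ) (hℓ : 0 < ℓ)
    (vh : (EuclideanSpace ℝ (Fin n) × EuclideanSpace ℝ (Fin n)) ×
        (EuclideanSpace ℝ (Fin n) × EuclideanSpace ℝ (Fin n)) →
      (EuclideanSpace ℝ (Fin n) × EuclideanSpace ℝ (Fin n)) ×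
        (EuclideanSpace ℝ (Fin n) × EuclideanSpace ℝ (Fin n)))
    (hvh : ∀ z u, omega0 (vh z).1 u.1 + omega0 (vh z).2 u.2 =
      fderiv ℝ (fun w : (EuclideanSpace ℝ (Fin n) × EuclideanSpace ℝ (Fin n)) ×
        (EuclideanSpace ℝ (Fin n) × EuclideanSpace ℝ (Fin n)) =>
          Real.sqrt (f w.1 ^ 2 + f w.2 ^ 2)) z u) :
    (∀ t : ℝ, HasDerivAt
      (fun t => ((((γ (ℓ / 2 - t / Real.sqrt 2)).1, -(γ (ℓ / 2 - t / Real.sqrt 2)).2),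
        γ (ℓ / 2 + t / Real.sqrt 2))))
      (vh (((γ (ℓ / 2 - t / Real.sqrt 2)).1, -(γ (ℓ / 2 - t / Real.sqrt 2)).2),
        γ (ℓ / 2 + t / Real.sqrt 2))) t) ∧
    ((((γ (ℓ / 2 - 0 / Real.sqrt 2)).1, -(γ (ℓ / 2 - 0 / Real.sqrt 2)).2),
        γ (ℓ / 2 + 0 / Real.sqrt 2)) =
      (((γ (ℓ / 2)).1, -(γ (ℓ / 2)).2), γ (ℓ / 2))) ∧
    ((((γ (ℓ / 2)).1, -(γ (ℓ / 2)).2), γ (ℓ / 2)) ∈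
      {w : (EuclideanSpace ℝ (Fin n) × EuclideanSpace ℝ (Fin n)) ×
          (EuclideanSpace ℝ (Fin n) × EuclideanSpace ℝ (Fin n)) |
        ∃ x ξ : EuclideanSpace ℝ (Fin n), w = ((x, -ξ), (x, ξ))}) ∧
    ((((γ (ℓ / 2 - (ℓ / Real.sqrt 2) / Real.sqrt 2)).1,
        -(γ (ℓ / 2 - (ℓ / Real.sqrt 2) / Real.sqrt 2)).2),
        γ (ℓ / 2 + (ℓ / Real.sqrt 2) / Real.sqrt 2)) =
      (((γ 0).1, -(γ 0).2), γ ℓ)) :=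
  chord_to_diagonal_chord_general n f hf hfsym vf hvf γ hγ hγ0 ℓ vh hvh
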